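/- arXiv:2403.09666 — 17 statements merged into one kernel-verified Lean document; each statement's English description precedes it below -/
import Mathlib

section
/- Let U1 and U2 be two 2-uninorms on [0,1] with 2-neutral elements {e1,f1}_{a1} and {e2,f2}_{a2}, respectively, let α ∈ [0,1], and suppose U1 is (α,U2)-migrative. If U2(α,e1) ∈ [e1,a1], then U2(α,a1) ≥ a1. -/
open unitInterval

/-- A 2-uninorm on the unit interval with 2-neutral element {e,f}_a:
commutative, associative, increasing in both variables, with e ≤ a ≤ f,
U(e,x) = x for all x ∈ [0,a] and U(f,x) = x for all x ∈ [a,1]. -/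
def IsTwoUninorm (U : I → I → I) (e a f : I) : Prop :=
  (∀ x y, U x y = U y x) ∧
  (∀ x y z, U (U x y) z = U x (U y z)) ∧
  (∀ x₁ x₂ y, x₁ ≤ x₂ → U x₁ y ≤ U x₂ y) ∧
  (∀ x y₁ y₂, y₁ ≤ y₂ → U x y₁ ≤ U x y₂) ∧
  e ≤ a ∧ a ≤ f ∧
  (∀ x, x ≤ a → U e x = x) ∧
  (∀ x, a ≤ x → U f x = x)

/-- U₁ is (α,U₂)-migrative: U₁(U₂(α,x),y) = U₁(x,U₂(α,y)) for all x,y. -/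
def Migrative (U₁ U₂ : I → I → I) (α : I) : Prop :=
  ∀ x y, U₁ (U₂ α x) y = U₁ x (U₂ α y)

theorem stmt_2 (U₁ U₂ : I → I → I) (e₁ a₁ f₁ e₂ a₂ f₂ : I)
    (hU₁ : IsTwoUninorm U₁ e₁ a₁ f₁) (hU₂ : IsTwoUninorm U₂ e₂ a₂ f₂) (α : I)
    (hmig : Migrative U₁ U₂ α) (h₁ : e₁ ≤ U₂ α e₁) (h₂ : U₂ α e₁ ≤ a₁) :
    a₁ ≤ U₂ α a₁ := by
  obtain ⟨comm, assoc, mono1, mono2, hea, haf, he, hf⟩ := hU₁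
  by_contra h
  push_neg at h
  have key := hmig e₁ a₁
  have h1 : a₁ ≤ U₁ (U₂ α e₁) a₁ := by
    calc a₁ = U₁ e₁ a₁ := (he a₁ le_rfl).symm
    _ ≤ U₁ (U₂ α e₁) a₁ := mono1 _ _ _ h₁
  rw [key, he _ h.le] at h1
  exact absurd h1 (not_le.mpr h)
end

section
/- Let U1 and U2 be two 2-uninorms on [0,1] with 2-neutral elements {e1,f1}_{a1} and {e2,f2}_{a2}, respectively, let α ∈ [0,1], and suppose U1 is (α,U2)-migrative. If U2(α,f1) ∈ [a1,f1], then U2(α,a1) ≤ a1. -/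
open unitInterval

theorem stmt_3 (U₁ U₂ : I → I → I) (e₁ a₁ f₁ e₂ a₂ f₂ : I)
    (hU₁ : IsTwoUninorm U₁ e₁ a₁ f₁) (hU₂ : IsTwoUninorm U₂ e₂ a₂ f₂) (α : I)
    (hmig : Migrative U₁ U₂ α) (h₁ : a₁ ≤ U₂ α f₁) (h₂ : U₂ α f₁ ≤ f₁) :
    U₂ α a₁ ≤ a₁ := by
  obtain ⟨hc, hass, hm1, hm2, he, hf, hid_e, hid_f⟩ := hU₁
  rcases le_or_gt (U₂ α a₁) a₁ with h | h
  · exact h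
  · -- a₁ ≤ U₂ α a₁
    have key : U₁ (U₂ α a₁) f₁ = U₁ a₁ (U₂ α f₁) := hmig a₁ f₁
    have lhs : U₁ (U₂ α a₁) f₁ = U₂ α a₁ := by
      rw [hc]; exact hid_f _ h.le
    have rhs : U₁ a₁ (U₂ α f₁) ≤ a₁ := by
      calc U₁ a₁ (U₂ α f₁) ≤ U₁ a₁ f₁ := hm2 _ _ _ h₂
        _ = U₁ f₁ a₁ := hc _ _
        _ = a₁ := hid_f _ le_rfl
    rw [lhs] at key
    exact key ▸ rhs
end

section
/- Let U1 and U2 be two 2-uninorms on [0,1] with 2-neutral elements {e1,f1}_{a1} and {e2,f2}_{a2}, respectively, let α ∈ [0,1], and set μ = U2(α,f1). If U2(α,e1) ≥ a1, then U1 is (α,U2)-migrative if and only if U1(μ,x) = U2(α,x) for each x ∈ [0,1]. -/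
open unitInterval

theorem stmt_4 (U₁ U₂ : I → I → I) (e₁ a₁ f₁ e₂ a₂ f₂ : I)
    (hU₁ : IsTwoUninorm U₁ e₁ a₁ f₁) (hU₂ : IsTwoUninorm U₂ e₂ a₂ f₂) (α : I)
    (μ : I) (hμ : μ = U₂ α f₁) (h : a₁ ≤ U₂ α e₁) :
    Migrative U₁ U₂ α ↔ ∀ x, U₁ μ x = U₂ α x := by
  obtain ⟨c₁, as₁, _, _, _, _, ne₁, nf₁⟩ := hU₁
  subst hμ
  constructor
  · intro hm y
    have hbf : U₁ f₁ (U₂ α e₁) = U₂ α e₁ := nf₁ _ h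
    rcases le_total (U₂ α y) a₁ with hc | hc
    · have h2 : U₂ α y = U₁ y (U₂ α e₁) := by
        rw [← hm y e₁, c₁, ne₁ _ hc]
      calc U₁ (U₂ α f₁) y = U₁ f₁ (U₂ α y) := hm f₁ y
        _ = U₁ f₁ (U₁ y (U₂ α e₁)) := by rw [← h2]
        _ = U₁ (U₁ f₁ (U₂ α e₁)) y := by rw [c₁ y, ← as₁]
        _ = U₁ y (U₂ α e₁) := by rw [hbf, c₁]
        _ = U₂ α y := h2.symm
    · calc U₁ (U₂ α f₁) y = U₁ f₁ (U₂ α y) := hm f₁ y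
        _ = U₂ α y := nf₁ _ hc
  · intro hμeq x y
    rw [← hμeq x, ← hμeq y, ← as₁, c₁ (U₂ α f₁) x, as₁]
end

section
/- Let U1 and U2 be two 2-uninorms on [0,1] with 2-neutral elements {e1,f1}_{a1} and {e2,f2}_{a2}, respectively, let α ∈ [0,1], and set λ = U2(α,e1). If U2(α,f1) ≤ a1, then U1 is (α,U2)-migrative if and only if U1(λ,x) = U2(α,x) for each x ∈ [0,1]. -/
open unitInterval

theorem stmt_5 (U₁ U₂ : I → I → I) (e₁ a₁ f₁ e₂ a₂ f₂ : I)
    (hU₁ : IsTwoUninorm U₁ e₁ a₁ f₁) (hU₂ : IsTwoUninorm U₂ e₂ a₂ f₂) (α : I)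
    (lam : I) (hlam : lam = U₂ α e₁) (h : U₂ α f₁ ≤ a₁) :
    Migrative U₁ U₂ α ↔ ∀ x, U₁ lam x = U₂ α x := by
  obtain ⟨c1, s1, m1l, m1r, hea, haf, hne, hnf⟩ := hU₁
  obtain ⟨c2, s2, m2l, m2r, -, -, -, -⟩ := hU₂
  constructor
  · intro M x
    rcases le_total (U₂ α x) a₁ with hz | hz
    · -- U₁ lam x = U₁ e₁ (U₂ α x) = U₂ α x
      rw [hlam, M e₁ x, hne _ hz]
    · rcases le_total x f₁ with hx | hx
      · -- then U₂ α x ≤ U₂ α f₁ ≤ a₁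
        have hz' : U₂ α x ≤ a₁ := le_trans (m2r α _ _ hx) h
        rw [hlam, M e₁ x, hne _ hz']
      · -- x ≥ f₁, U₂ α x ≥ a₁
        have key : U₂ α f₁ = U₁ lam f₁ := by
          rw [hlam, M e₁ f₁, hne _ h]
        have hfx : U₁ f₁ x = x := hnf _ (le_trans haf hx)
        calc U₁ lam x = U₁ lam (U₁ f₁ x) := by rw [hfx]
          _ = U₁ (U₁ lam f₁) x := by rw [s1]
          _ = U₁ (U₂ α f₁) x := by rw [key]
          _ = U₁ f₁ (U₂ α x) := M f₁ x
          _ = U₂ α x := hnf _ hz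
  · intro H x y
    have h1 : U₂ α x = U₁ lam x := (H x).symm
    have h2 : U₂ α y = U₁ lam y := (H y).symm
    rw [h1, h2, s1, c1 lam y, ← s1 x y lam, c1 (U₁ x y) lam]
end

section
/- Let U1 and U2 be two 2-uninorms on [0,1] with 2-neutral elements {e1,f1}_{a1} and {e2,f2}_{a2}, respectively, let α ∈ [0,1], and set λ = U2(α,e1), μ = U2(α,f1). If U2(α,e1) ∈ [e1,a1], then U1 is (α,U2)-migrative if and only if U2(α,x) = U1(λ,x) for each x ∈ [0,a1], U2(α,x) = U1(μ,x) for each x ∈ [a1,1], and U1(μ,x) = U1(a1,x) for each x ∈ [0,a1]. -/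
open unitInterval

theorem stmt_6 (U₁ U₂ : I → I → I) (e₁ a₁ f₁ e₂ a₂ f₂ : I)
    (hU₁ : IsTwoUninorm U₁ e₁ a₁ f₁) (hU₂ : IsTwoUninorm U₂ e₂ a₂ f₂) (α : I)
    (lam μ : I) (hlam : lam = U₂ α e₁) (hμ : μ = U₂ α f₁)
    (h₁ : e₁ ≤ U₂ α e₁) (h₂ : U₂ α e₁ ≤ a₁) :
    Migrative U₁ U₂ α ↔
      ((∀ x, x ≤ a₁ → U₂ α x = U₁ lam x) ∧
       (∀ x, a₁ ≤ x → U₂ α x = U₁ μ x) ∧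
       (∀ x, x ≤ a₁ → U₁ μ x = U₁ a₁ x)) := by
  obtain ⟨c₁, s₁, mL, mR, hea, haf, he, hf⟩ := hU₁
  obtain ⟨-, -, -, m2, -, -, -, -⟩ := hU₂
  have hl1 : e₁ ≤ lam := by rw [hlam]; exact h₁
  have hl2 : lam ≤ a₁ := by rw [hlam]; exact h₂
  have haa : U₁ a₁ a₁ = a₁ :=
    le_antisymm ((mL a₁ f₁ a₁ haf).trans_eq (hf a₁ le_rfl))
      ((he a₁ le_rfl).symm.trans_le (mL e₁ a₁ a₁ hea))
  have hla : U₁ lam a₁ = a₁ :=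
    le_antisymm ((mL lam a₁ a₁ hl2).trans_eq haa)
      ((he a₁ le_rfl).symm.trans_le (mL e₁ lam a₁ hl1))
  -- key: U₁ f₁ lam ≤ a₁
  have hc : U₁ f₁ lam ≤ a₁ := (mR f₁ lam a₁ hl2).trans_eq (hf a₁ le_rfl)
  -- key lemma F1 : for y ≥ a₁, U₁ lam y = U₁ a₁ y  (unconditional)
  have F1 : ∀ y, a₁ ≤ y → U₁ lam y = U₁ a₁ y := by
    intro y hy
    refine le_antisymm (mL lam a₁ y hl2) ?_
    have h1 : a₁ ≤ U₁ lam y := hla ▸ mR lam a₁ y hy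
    calc U₁ a₁ y = U₁ (U₁ a₁ lam) y := by rw [c₁ a₁ lam, hla]
      _ = U₁ a₁ (U₁ lam y) := s₁ a₁ lam y
      _ ≤ U₁ f₁ (U₁ lam y) := mL a₁ f₁ _ haf
      _ = U₁ lam y := hf _ h1
  constructor
  · intro hM
    have h5 : U₁ e₁ (U₂ α a₁) = a₁ := by
      have h := hM a₁ e₁
      rw [← hlam, c₁ a₁ lam, hla] at h
      exact (c₁ e₁ (U₂ α a₁)).trans h
    have hta : U₂ α a₁ = a₁ := by
      rcases le_total (U₂ α a₁) a₁ with h | h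
      · rw [← he (U₂ α a₁) h, h5]
      · have hce : U₁ (U₂ α f₁) e₁ = U₁ f₁ lam := by rw [hM f₁ e₁, ← hlam]
        have hma : U₁ (U₂ α f₁) a₁ = U₂ α a₁ := by rw [hM f₁ a₁, hf _ h]
        have key : U₂ α a₁ = U₁ (U₁ f₁ lam) (U₂ α a₁) := by
          calc U₂ α a₁ = U₁ (U₂ α f₁) a₁ := hma.symm
            _ = U₁ (U₂ α f₁) (U₁ e₁ (U₂ α a₁)) := by rw [h5]
            _ = U₁ (U₁ (U₂ α f₁) e₁) (U₂ α a₁) := (s₁ _ _ _).symm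
            _ = U₁ (U₁ f₁ lam) (U₂ α a₁) := by rw [hce]
        have h6 : a₁ = U₂ α a₁ := by
          calc a₁ = U₁ e₁ (U₂ α a₁) := h5.symm
            _ = U₁ e₁ (U₁ (U₁ f₁ lam) (U₂ α a₁)) := by rw [← key]
            _ = U₁ (U₁ e₁ (U₁ f₁ lam)) (U₂ α a₁) := (s₁ _ _ _).symm
            _ = U₁ (U₁ f₁ lam) (U₂ α a₁) := by rw [he _ hc]
            _ = U₂ α a₁ := key.symm
        exact h6.symm
    have H1 : ∀ x, x ≤ a₁ → U₂ α x = U₁ lam x := by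
      intro x hx
      have hx' : U₂ α x ≤ a₁ := (m2 α x a₁ hx).trans_eq hta
      rw [hlam]
      exact ((he _ hx').symm.trans (hM e₁ x).symm).symm.symm
    have hμ1 : a₁ ≤ μ := by
      rw [hμ]; exact hta.symm.trans_le (m2 α a₁ f₁ haf)
    have H2 : ∀ x, a₁ ≤ x → U₂ α x = U₁ μ x := by
      intro x hx
      have hx' : a₁ ≤ U₂ α x := hta.symm.trans_le (m2 α a₁ x hx)
      rw [hμ]
      exact ((hM f₁ x).trans (hf _ hx')).symm
    refine ⟨H1, H2, ?_⟩
    intro x hx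
    refine le_antisymm ?_ (mL a₁ μ x hμ1)
    calc U₁ μ x = U₁ f₁ (U₂ α x) := by rw [hμ, hM f₁ x]
      _ = U₁ f₁ (U₁ lam x) := by rw [← H1 x hx]
      _ = U₁ (U₁ f₁ lam) x := (s₁ f₁ lam x).symm
      _ ≤ U₁ a₁ x := mL _ a₁ x hc
  · rintro ⟨H1, H2, H3⟩ x y
    rcases le_total x a₁ with hx | hx <;> rcases le_total y a₁ with hy | hy
    · -- x ≤ a₁, y ≤ a₁
      rw [H1 x hx, H1 y hy, c₁ lam x, s₁ x lam y]
    · -- x ≤ a₁ ≤ y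
      rw [H1 x hx, H2 y hy]
      calc U₁ (U₁ lam x) y = U₁ (U₁ x lam) y := by rw [c₁ lam x]
        _ = U₁ x (U₁ lam y) := s₁ x lam y
        _ = U₁ x (U₁ a₁ y) := by rw [F1 y hy]
        _ = U₁ (U₁ x a₁) y := (s₁ x a₁ y).symm
        _ = U₁ (U₁ a₁ x) y := by rw [c₁ x a₁]
        _ = U₁ (U₁ μ x) y := by rw [← H3 x hx]
        _ = U₁ (U₁ x μ) y := by rw [c₁ μ x]
        _ = U₁ x (U₁ μ y) := s₁ x μ y
    · -- y ≤ a₁ ≤ x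
      rw [H2 x hx, H1 y hy]
      calc U₁ (U₁ μ x) y = U₁ (U₁ x μ) y := by rw [c₁ μ x]
        _ = U₁ x (U₁ μ y) := s₁ x μ y
        _ = U₁ x (U₁ a₁ y) := by rw [H3 y hy]
        _ = U₁ (U₁ x a₁) y := (s₁ x a₁ y).symm
        _ = U₁ (U₁ a₁ x) y := by rw [c₁ x a₁]
        _ = U₁ (U₁ lam x) y := by rw [F1 x hx]
        _ = U₁ (U₁ x lam) y := by rw [c₁ lam x]
        _ = U₁ x (U₁ lam y) := s₁ x lam y
    · -- a₁ ≤ x, a₁ ≤ y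
      rw [H2 x hx, H2 y hy, c₁ μ x, s₁ x μ y]
end

section
/- Let U1 and U2 be two 2-uninorms on [0,1] with 2-neutral elements {e1,f1}_{a1} and {e2,f2}_{a2}, respectively, let α ∈ [0,1], and set λ = U2(α,e1), μ = U2(α,f1). If U2(α,f1) ∈ [a1,f1], then U1 is (α,U2)-migrative if and only if U2(α,x) = U1(λ,x) for each x ∈ [0,a1], U2(α,x) = U1(μ,x) for each x ∈ [a1,1], and U1(λ,x) = U1(a1,x) for each x ∈ [a1,1]. -/
open unitInterval

theorem stmt_7 (U₁ U₂ : I → I → I) (e₁ a₁ f₁ e₂ a₂ f₂ : I)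
    (hU₁ : IsTwoUninorm U₁ e₁ a₁ f₁) (hU₂ : IsTwoUninorm U₂ e₂ a₂ f₂) (α : I)
    (lam μ : I) (hlam : lam = U₂ α e₁) (hμ : μ = U₂ α f₁)
    (h₁ : a₁ ≤ U₂ α f₁) (h₂ : U₂ α f₁ ≤ f₁) :
    Migrative U₁ U₂ α ↔
      ((∀ x, x ≤ a₁ → U₂ α x = U₁ lam x) ∧
       (∀ x, a₁ ≤ x → U₂ α x = U₁ μ x) ∧
       (∀ x, a₁ ≤ x → U₁ lam x = U₁ a₁ x)) := by
  obtain ⟨c1, as1, ml1, mr1, hea, haf, ne1, nf1⟩ := hU₁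
  obtain ⟨c2, as2, ml2, mr2, -, -, -, -⟩ := hU₂
  subst hlam
  subst hμ
  -- U₁ f₁ a₁ = a₁
  have hfa : U₁ f₁ a₁ = a₁ := nf1 a₁ le_rfl
  have hea1 : U₁ e₁ a₁ = a₁ := ne1 a₁ le_rfl
  -- U₁ a₁ a₁ = a₁
  have haa : U₁ a₁ a₁ = a₁ := by
    refine le_antisymm ?_ ?_
    · calc U₁ a₁ a₁ ≤ U₁ f₁ a₁ := ml1 _ _ _ haf
        _ = a₁ := hfa
    · calc a₁ = U₁ e₁ a₁ := hea1.symm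
        _ ≤ U₁ a₁ a₁ := ml1 _ _ _ hea
  -- U₁ a₁ μ = a₁
  have haμ : U₁ a₁ (U₂ α f₁) = a₁ := by
    refine le_antisymm ?_ ?_
    · calc U₁ a₁ (U₂ α f₁) ≤ U₁ a₁ f₁ := mr1 _ _ _ h₂
        _ = U₁ f₁ a₁ := c1 _ _
        _ = a₁ := hfa
    · calc a₁ = U₁ a₁ a₁ := haa.symm
        _ ≤ U₁ a₁ (U₂ α f₁) := mr1 _ _ _ h₁
  -- U₁ e₁ μ ≥ a₁
  have hpe : a₁ ≤ U₁ e₁ (U₂ α f₁) := by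
    calc a₁ = U₁ e₁ a₁ := hea1.symm
      _ ≤ U₁ e₁ (U₂ α f₁) := mr1 _ _ _ h₁
  constructor
  · intro hM
    -- forward direction
    have hcf : U₁ (U₂ α a₁) f₁ = a₁ := by rw [hM a₁ f₁, haμ]
    have hlamf : U₁ (U₂ α e₁) f₁ = a₁ := by
      refine le_antisymm ?_ ?_
      · calc U₁ (U₂ α e₁) f₁ ≤ U₁ (U₂ α a₁) f₁ := ml1 _ _ _ (mr2 _ _ _ hea)
          _ = a₁ := hcf
      · calc a₁ ≤ U₁ e₁ (U₂ α f₁) := hpe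
          _ = U₁ (U₂ α e₁) f₁ := (hM e₁ f₁).symm
    have hp : U₁ e₁ (U₂ α f₁) = a₁ := by rw [← hM e₁ f₁, hlamf]
    have hlama : U₁ (U₂ α e₁) a₁ = a₁ := by
      calc U₁ (U₂ α e₁) a₁ = U₁ (U₂ α e₁) (U₁ f₁ a₁) := by rw [hfa]
        _ = U₁ (U₁ (U₂ α e₁) f₁) a₁ := (as1 _ _ _).symm
        _ = U₁ a₁ a₁ := by rw [hlamf]
        _ = a₁ := haa
    have hc : U₂ α a₁ = a₁ := by
      rcases le_total (U₂ α a₁) a₁ with h | h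
      · calc U₂ α a₁ = U₁ e₁ (U₂ α a₁) := (ne1 _ h).symm
          _ = U₁ (U₂ α e₁) a₁ := (hM e₁ a₁).symm
          _ = a₁ := hlama
      · calc U₂ α a₁ = U₁ f₁ (U₂ α a₁) := (nf1 _ h).symm
          _ = U₁ (U₂ α a₁) f₁ := c1 _ _
          _ = a₁ := hcf
    have hB : ∀ x, a₁ ≤ x → U₂ α x = U₁ (U₂ α f₁) x := by
      intro x hx
      have hax : a₁ ≤ U₂ α x := by
        calc a₁ = U₂ α a₁ := hc.symm
          _ ≤ U₂ α x := mr2 _ _ _ hx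
      calc U₂ α x = U₁ f₁ (U₂ α x) := (nf1 _ hax).symm
        _ = U₁ (U₂ α f₁) x := (hM f₁ x).symm
    refine ⟨?_, hB, ?_⟩
    · intro x hx
      have hax : U₂ α x ≤ a₁ := by
        calc U₂ α x ≤ U₂ α a₁ := mr2 _ _ _ hx
          _ = a₁ := hc
      calc U₂ α x = U₁ e₁ (U₂ α x) := (ne1 _ hax).symm
        _ = U₁ (U₂ α e₁) x := (hM e₁ x).symm
    · intro x hx
      calc U₁ (U₂ α e₁) x = U₁ e₁ (U₂ α x) := hM e₁ x
        _ = U₁ e₁ (U₁ (U₂ α f₁) x) := by rw [← hB x hx]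
        _ = U₁ (U₁ e₁ (U₂ α f₁)) x := (as1 _ _ _).symm
        _ = U₁ a₁ x := by rw [hp]
  · rintro ⟨hA, hB, hC⟩
    -- reverse direction
    have hlamf : U₁ (U₂ α e₁) f₁ = a₁ := by
      calc U₁ (U₂ α e₁) f₁ = U₁ a₁ f₁ := hC f₁ haf
        _ = U₁ f₁ a₁ := c1 _ _
        _ = a₁ := hfa
    have hlamμ : U₁ (U₂ α e₁) (U₂ α f₁) = a₁ := by
      refine le_antisymm ?_ ?_
      · calc U₁ (U₂ α e₁) (U₂ α f₁) ≤ U₁ (U₂ α e₁) f₁ := mr1 _ _ _ h₂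
          _ = a₁ := hlamf
      · calc a₁ = U₁ a₁ a₁ := haa.symm
          _ ≤ U₁ a₁ (U₂ α f₁) := mr1 _ _ _ h₁
          _ = U₁ (U₂ α e₁) (U₂ α f₁) := (hC _ h₁).symm
    have hp : U₁ e₁ (U₂ α f₁) = a₁ := by
      refine le_antisymm ?_ hpe
      calc U₁ e₁ (U₂ α f₁) ≤ U₁ a₁ (U₂ α f₁) := ml1 _ _ _ hea
        _ = a₁ := haμ
    -- mixed case helper
    have key : ∀ x y, x ≤ a₁ → a₁ ≤ y → U₁ (U₂ α x) y = U₁ x (U₂ α y) := by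
      intro x y hx hy
      have hxe : U₁ x e₁ = x := by rw [c1]; exact ne1 x hx
      calc U₁ (U₂ α x) y = U₁ (U₁ (U₂ α e₁) x) y := by rw [← hA x hx]
        _ = U₁ (U₁ x (U₂ α e₁)) y := by rw [c1 (U₂ α e₁) x]
        _ = U₁ x (U₁ (U₂ α e₁) y) := as1 _ _ _
        _ = U₁ x (U₁ a₁ y) := by rw [hC y hy]
        _ = U₁ x (U₁ (U₁ e₁ (U₂ α f₁)) y) := by rw [hp]
        _ = U₁ x (U₁ e₁ (U₁ (U₂ α f₁) y)) := by rw [as1 e₁]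
        _ = U₁ (U₁ x e₁) (U₁ (U₂ α f₁) y) := (as1 _ _ _).symm
        _ = U₁ x (U₁ (U₂ α f₁) y) := by rw [hxe]
        _ = U₁ x (U₂ α y) := by rw [← hB y hy]
    intro x y
    rcases le_total x a₁ with hx | hx <;> rcases le_total y a₁ with hy | hy
    · -- both ≤ a₁
      calc U₁ (U₂ α x) y = U₁ (U₁ (U₂ α e₁) x) y := by rw [← hA x hx]
        _ = U₁ (U₁ x (U₂ α e₁)) y := by rw [c1 (U₂ α e₁) x]
        _ = U₁ x (U₁ (U₂ α e₁) y) := as1 _ _ _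
        _ = U₁ x (U₂ α y) := by rw [← hA y hy]
    · exact key x y hx hy
    · -- y ≤ a₁ ≤ x : use commutativity and key
      calc U₁ (U₂ α x) y = U₁ y (U₂ α x) := c1 _ _
        _ = U₁ (U₂ α y) x := (key y x hy hx).symm
        _ = U₁ x (U₂ α y) := c1 _ _
    · -- both ≥ a₁
      calc U₁ (U₂ α x) y = U₁ (U₁ (U₂ α f₁) x) y := by rw [← hB x hx]
        _ = U₁ (U₁ x (U₂ α f₁)) y := by rw [c1 (U₂ α f₁) x]
        _ = U₁ x (U₁ (U₂ α f₁) y) := as1 _ _ _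
        _ = U₁ x (U₂ α y) := by rw [← hB y hy]
end

section
/- Let U1 and U2 be two 2-uninorms on [0,1] with 2-neutral elements {e1,f1}_{a1} and {e2,f2}_{a2}, respectively, let α ∈ [0,1], and set λ = U2(α,e1). If U2(α,e1) ≤ e1 and U2(α,f1) ≤ a1, then U1 is (α,U2)-migrative if and only if U1(λ,x) = U2(α,x) for each x ∈ [0,1]. -/
open unitInterval

theorem stmt_8 (U₁ U₂ : I → I → I) (e₁ a₁ f₁ e₂ a₂ f₂ : I)
    (hU₁ : IsTwoUninorm U₁ e₁ a₁ f₁) (hU₂ : IsTwoUninorm U₂ e₂ a₂ f₂) (α : I)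
    (lam : I) (hlam : lam = U₂ α e₁) (h₁ : U₂ α e₁ ≤ e₁) (h₂ : U₂ α f₁ ≤ a₁) :
    Migrative U₁ U₂ α ↔ ∀ x, U₁ lam x = U₂ α x := by
  obtain ⟨comm, assoc, _, _, hea, haf, hne, hnf⟩ := hU₁
  constructor
  · intro hm x
    set t := U₂ α x with ht
    have key : U₁ lam x = U₁ e₁ t := by rw [hlam]; exact hm e₁ x
    rcases le_total t a₁ with h | h
    · rw [key, hne t h]
    · -- t ≥ a₁ : t = U₁ (U₂ α f₁) x, and U₂ α f₁ ≤ a₁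
      have ht2 : t = U₁ (U₂ α f₁) x := by
        rw [hm f₁ x, ← ht, hnf t h]
      have : U₁ e₁ t = t := by
        conv_lhs => rw [ht2, ← assoc, hne _ h₂, ← ht2]
      rw [key, this]
  · intro h x y
    have comm' : ∀ x y z, U₁ x (U₁ y z) = U₁ y (U₁ x z) := by
      intro a b c
      rw [← assoc, comm a b, assoc]
    rw [← h x, ← h y, ← assoc, comm lam x, assoc]
end

section
/- Let U1 and U2 be two 2-uninorms on [0,1] with 2-neutral elements {e1,f1}_{a1} and {e2,f2}_{a2}, respectively, let α ∈ [0,1], and set λ = U2(α,e1), μ = U2(α,f1). If U2(α,e1) ≤ e1 and U2(α,f1) ≥ a1, then U1 is (α,U2)-migrative if and only if U2(α,x) = U1(λ,x) for each x ∈ [0,a1], U2(α,x) = U1(μ,x) for each x ∈ [a1,1], and U1(λ,x) = U1(a1,x) for each x ∈ [a1,1]. -/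
open unitInterval

theorem stmt_9 (U₁ U₂ : I → I → I) (e₁ a₁ f₁ e₂ a₂ f₂ : I)
    (hU₁ : IsTwoUninorm U₁ e₁ a₁ f₁) (hU₂ : IsTwoUninorm U₂ e₂ a₂ f₂) (α : I)
    (lam μ : I) (hlam : lam = U₂ α e₁) (hμ : μ = U₂ α f₁)
    (h₁ : U₂ α e₁ ≤ e₁) (h₂ : a₁ ≤ U₂ α f₁) :
    Migrative U₁ U₂ α ↔
      ((∀ x, x ≤ a₁ → U₂ α x = U₁ lam x) ∧
       (∀ x, a₁ ≤ x → U₂ α x = U₁ μ x) ∧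
       (∀ x, a₁ ≤ x → U₁ lam x = U₁ a₁ x)) := by
  subst hlam hμ
  obtain ⟨c1, as1, ml1, mr1, hea, haf, ne1, nf1⟩ := hU₁
  obtain ⟨c2, as2, ml2, mr2, he2, hf2, ne2, nf2⟩ := hU₂
  -- U₁ e₁ f₁ = a₁
  have hk : U₁ e₁ f₁ = a₁ :=
    le_antisymm
      (calc U₁ e₁ f₁ ≤ U₁ a₁ f₁ := ml1 _ _ _ hea
        _ = U₁ f₁ a₁ := c1 _ _
        _ = a₁ := nf1 _ le_rfl)
      (calc a₁ = U₁ e₁ a₁ := (ne1 _ le_rfl).symm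
        _ ≤ U₁ e₁ f₁ := mr1 _ _ _ haf)
  -- U₁ e₁ t = U₁ a₁ t for t ≥ a₁
  have hE : ∀ t, a₁ ≤ t → U₁ e₁ t = U₁ a₁ t := by
    intro t ht
    calc U₁ e₁ t = U₁ e₁ (U₁ f₁ t) := by rw [nf1 t ht]
      _ = U₁ (U₁ e₁ f₁) t := (as1 _ _ _).symm
      _ = U₁ a₁ t := by rw [hk]
  constructor
  · intro M
    -- c = U₁ λ f₁ = a₁
    have hc : U₁ (U₂ α e₁) f₁ = a₁ :=
      le_antisymm
        (calc U₁ (U₂ α e₁) f₁ ≤ U₁ e₁ f₁ := ml1 _ _ _ h₁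
          _ = a₁ := hk)
        (calc a₁ = U₁ e₁ a₁ := (ne1 _ le_rfl).symm
          _ ≤ U₁ e₁ (U₂ α f₁) := mr1 _ _ _ h₂
          _ = U₁ (U₂ α e₁) f₁ := (M e₁ f₁).symm)
    -- (iii)
    have H3 : ∀ x, a₁ ≤ x → U₁ (U₂ α e₁) x = U₁ a₁ x := by
      intro x hx
      calc U₁ (U₂ α e₁) x = U₁ (U₂ α e₁) (U₁ f₁ x) := by rw [nf1 x hx]
        _ = U₁ (U₁ (U₂ α e₁) f₁) x := (as1 _ _ _).symm
        _ = U₁ a₁ x := by rw [hc]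
    -- U₂ α a₁ ≤ a₁
    have hs : U₂ α a₁ ≤ a₁ := by
      rcases le_total (U₂ α a₁) a₁ with h | h
      · exact h
      · have e1' : U₁ (U₂ α f₁) a₁ = U₂ α a₁ := by
          rw [M f₁ a₁, nf1 _ h]
        have e2' : U₂ α a₁ = U₁ (U₂ α e₁) (U₂ α f₁) := by
          calc U₂ α a₁ = U₁ (U₂ α f₁) a₁ := e1'.symm
            _ = U₁ (U₂ α f₁) (U₁ (U₂ α e₁) f₁) := by rw [hc]
            _ = U₁ (U₁ (U₂ α f₁) (U₂ α e₁)) f₁ := (as1 _ _ _).symm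
            _ = U₁ (U₁ (U₂ α e₁) (U₂ α f₁)) f₁ := by rw [c1 (U₂ α f₁) (U₂ α e₁)]
            _ = U₁ (U₂ α e₁) (U₁ (U₂ α f₁) f₁) := as1 _ _ _
            _ = U₁ (U₂ α e₁) (U₁ f₁ (U₂ α f₁)) := by rw [c1 (U₂ α f₁) f₁]
            _ = U₁ (U₂ α e₁) (U₂ α f₁) := by rw [nf1 _ h₂]
        calc U₂ α a₁ = U₁ (U₂ α e₁) (U₂ α f₁) := e2'
          _ ≤ U₁ e₁ (U₂ α f₁) := ml1 _ _ _ h₁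
          _ = U₁ (U₂ α e₁) f₁ := (M e₁ f₁).symm
          _ = a₁ := hc
    refine ⟨?_, ?_, H3⟩
    · intro x hx
      have ht : U₂ α x ≤ a₁ := le_trans (mr2 α x a₁ hx) hs
      calc U₂ α x = U₁ e₁ (U₂ α x) := (ne1 _ ht).symm
        _ = U₁ (U₂ α e₁) x := (M e₁ x).symm
    · intro x hx
      have hax : a₁ ≤ U₁ a₁ x :=
        calc a₁ = U₁ e₁ a₁ := (ne1 _ le_rfl).symm
          _ ≤ U₁ a₁ a₁ := ml1 _ _ _ hea
          _ ≤ U₁ a₁ x := mr1 _ _ _ hx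
      have ht : a₁ ≤ U₂ α x := by
        rcases le_total a₁ (U₂ α x) with h | h
        · exact h
        · calc a₁ ≤ U₁ a₁ x := hax
            _ = U₁ (U₂ α e₁) x := (H3 x hx).symm
            _ = U₁ e₁ (U₂ α x) := M e₁ x
            _ = U₂ α x := ne1 _ h
      calc U₂ α x = U₁ f₁ (U₂ α x) := (nf1 _ ht).symm
        _ = U₁ (U₂ α f₁) x := (M f₁ x).symm
  · rintro ⟨H1, H2, H3⟩
    -- U₂ α a₁ = a₁
    have hs : U₂ α a₁ = a₁ :=
      le_antisymm
        (calc U₂ α a₁ = U₁ (U₂ α e₁) a₁ := H1 a₁ le_rfl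
          _ ≤ U₁ e₁ a₁ := ml1 _ _ _ h₁
          _ = a₁ := ne1 _ le_rfl)
        (calc a₁ = U₁ e₁ a₁ := (ne1 _ le_rfl).symm
          _ ≤ U₁ a₁ a₁ := ml1 _ _ _ hea
          _ = U₁ (U₂ α e₁) a₁ := (H3 a₁ le_rfl).symm
          _ = U₂ α a₁ := (H1 a₁ le_rfl).symm)
    -- U₁ μ a₁ = a₁
    have hμa : U₁ (U₂ α f₁) a₁ = a₁ := by
      rw [← H2 a₁ le_rfl, hs]
    -- mixed case
    have Hm : ∀ x y, x ≤ a₁ → a₁ ≤ y → U₁ (U₂ α x) y = U₁ x (U₂ α y) := by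
      intro x y hx hy
      have hq : a₁ ≤ U₂ α y := hs ▸ mr2 α a₁ y hy
      have star : U₁ a₁ (U₂ α y) = U₁ a₁ y := by
        calc U₁ a₁ (U₂ α y) = U₁ a₁ (U₁ (U₂ α f₁) y) := by rw [← H2 y hy]
          _ = U₁ (U₁ a₁ (U₂ α f₁)) y := (as1 _ _ _).symm
          _ = U₁ (U₁ (U₂ α f₁) a₁) y := by rw [c1 a₁ (U₂ α f₁)]
          _ = U₁ a₁ y := by rw [hμa]
      calc U₁ (U₂ α x) y = U₁ (U₁ (U₂ α e₁) x) y := by rw [← H1 x hx]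
        _ = U₁ (U₁ x (U₂ α e₁)) y := by rw [c1 (U₂ α e₁) x]
        _ = U₁ x (U₁ (U₂ α e₁) y) := as1 _ _ _
        _ = U₁ x (U₁ a₁ y) := by rw [H3 y hy]
        _ = U₁ x (U₁ a₁ (U₂ α y)) := by rw [star]
        _ = U₁ x (U₁ e₁ (U₂ α y)) := by rw [hE _ hq]
        _ = U₁ (U₁ x e₁) (U₂ α y) := (as1 _ _ _).symm
        _ = U₁ (U₁ e₁ x) (U₂ α y) := by rw [c1 x e₁]
        _ = U₁ x (U₂ α y) := by rw [ne1 x hx]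
    intro x y
    rcases le_total x a₁ with hx | hx <;> rcases le_total y a₁ with hy | hy
    · -- both low
      calc U₁ (U₂ α x) y = U₁ (U₁ (U₂ α e₁) x) y := by rw [← H1 x hx]
        _ = U₁ (U₂ α e₁) (U₁ x y) := as1 _ _ _
        _ = U₁ (U₂ α e₁) (U₁ y x) := by rw [c1 x y]
        _ = U₁ (U₁ (U₂ α e₁) y) x := (as1 _ _ _).symm
        _ = U₁ x (U₁ (U₂ α e₁) y) := c1 _ _
        _ = U₁ x (U₂ α y) := by rw [← H1 y hy]
    · exact Hm x y hx hy
    · calc U₁ (U₂ α x) y = U₁ y (U₂ α x) := c1 _ _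
        _ = U₁ (U₂ α y) x := (Hm y x hy hx).symm
        _ = U₁ x (U₂ α y) := c1 _ _
    · -- both high
      calc U₁ (U₂ α x) y = U₁ (U₁ (U₂ α f₁) x) y := by rw [← H2 x hx]
        _ = U₁ (U₂ α f₁) (U₁ x y) := as1 _ _ _
        _ = U₁ (U₂ α f₁) (U₁ y x) := by rw [c1 x y]
        _ = U₁ (U₁ (U₂ α f₁) y) x := (as1 _ _ _).symm
        _ = U₁ x (U₁ (U₂ α f₁) y) := c1 _ _
        _ = U₁ x (U₂ α y) := by rw [← H2 y hy]
end

section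
/- Let U1 and U2 be two 2-uninorms on [0,1] with 2-neutral elements {e1,f1}_{a1} and {e2,f2}_{a2}, respectively, let α ∈ [0,1], and set λ = U2(α,e1), μ = U2(α,f1). If U2(α,f1) ≥ f1 and U2(α,e1) ≤ a1, then U1 is (α,U2)-migrative if and only if U2(α,x) = U1(λ,x) for each x ∈ [0,a1], U2(α,x) = U1(μ,x) for each x ∈ [a1,1], and U1(μ,x) = U1(a1,x) for each x ∈ [0,a1]. -/
open unitInterval

theorem stmt_10 (U₁ U₂ : I → I → I) (e₁ a₁ f₁ e₂ a₂ f₂ : I)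
    (hU₁ : IsTwoUninorm U₁ e₁ a₁ f₁) (hU₂ : IsTwoUninorm U₂ e₂ a₂ f₂) (α : I)
    (lam μ : I) (hlam : lam = U₂ α e₁) (hμ : μ = U₂ α f₁)
    (h₁ : f₁ ≤ U₂ α f₁) (h₂ : U₂ α e₁ ≤ a₁) :
    Migrative U₁ U₂ α ↔
      ((∀ x, x ≤ a₁ → U₂ α x = U₁ lam x) ∧
       (∀ x, a₁ ≤ x → U₂ α x = U₁ μ x) ∧
       (∀ x, x ≤ a₁ → U₁ μ x = U₁ a₁ x)) := by
  obtain ⟨comm, assoc, mono1, mono2, hea, haf, hne, hnf⟩ := hU₁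
  obtain ⟨-, -, -, mono2', -, -, -, -⟩ := hU₂
  have hmu_f : f₁ ≤ μ := hμ ▸ h₁
  have hmu_a : a₁ ≤ μ := le_trans haf hmu_f
  have hlam_a : lam ≤ a₁ := hlam ▸ h₂
  have hfa : U₁ f₁ a₁ = a₁ := hnf a₁ le_rfl
  have hea' : U₁ e₁ a₁ = a₁ := hne a₁ le_rfl
  constructor
  · intro M
    have star : ∀ x, U₁ lam x = U₁ e₁ (U₂ α x) := fun x => by
      rw [hlam]; exact M e₁ x
    have dstar : ∀ x, U₁ μ x = U₁ f₁ (U₂ α x) := fun x => by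
      rw [hμ]; exact M f₁ x
    -- U₁ μ e₁ = a₁
    have hmue : U₁ μ e₁ = U₁ f₁ lam := by
      rw [hμ, hlam]; exact M f₁ e₁
    have hce : U₁ μ e₁ = a₁ := by
      apply le_antisymm
      · rw [hmue]
        calc U₁ f₁ lam ≤ U₁ f₁ a₁ := mono2 _ _ _ hlam_a
          _ = a₁ := hfa
      · calc a₁ = U₁ e₁ a₁ := hea'.symm
          _ = U₁ a₁ e₁ := comm _ _
          _ ≤ U₁ μ e₁ := mono1 _ _ _ hmu_a
    have H3 : ∀ x, x ≤ a₁ → U₁ μ x = U₁ a₁ x := by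
      intro x hx
      calc U₁ μ x = U₁ μ (U₁ e₁ x) := by rw [hne x hx]
        _ = U₁ (U₁ μ e₁) x := (assoc _ _ _).symm
        _ = U₁ a₁ x := by rw [hce]
    -- U₁ lam a₁ = a₁ and U₁ a₁ a₁ = a₁
    have hfl : U₁ f₁ lam = a₁ := hmue ▸ hce
    have hfe_a : U₁ f₁ e₁ ≤ a₁ := by
      calc U₁ f₁ e₁ ≤ U₁ f₁ a₁ := mono2 _ _ _ hea
        _ = a₁ := hfa
    have h_a_le_la : a₁ ≤ U₁ lam a₁ := by
      calc a₁ = U₁ f₁ lam := hfl.symm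
        _ = U₁ f₁ (U₁ e₁ lam) := by rw [hne lam hlam_a]
        _ = U₁ (U₁ f₁ e₁) lam := (assoc _ _ _).symm
        _ ≤ U₁ a₁ lam := mono1 _ _ _ hfe_a
        _ = U₁ lam a₁ := comm _ _
    have haa : U₁ a₁ a₁ = a₁ := by
      apply le_antisymm
      · calc U₁ a₁ a₁ ≤ U₁ f₁ a₁ := mono1 _ _ _ haf
          _ = a₁ := hfa
      · calc a₁ ≤ U₁ lam a₁ := h_a_le_la
          _ ≤ U₁ a₁ a₁ := mono1 _ _ _ hlam_a
    have hla : U₁ lam a₁ = a₁ := by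
      apply le_antisymm
      · calc U₁ lam a₁ ≤ U₁ a₁ a₁ := mono1 _ _ _ hlam_a
          _ = a₁ := haa
      · exact h_a_le_la
    -- U₂ α a₁ = a₁
    have hga : U₂ α a₁ = a₁ := by
      have he_t : U₁ e₁ (U₂ α a₁) = a₁ := by rw [← star a₁, hla]
      have hf_t : U₁ f₁ (U₂ α a₁) = a₁ := by
        rw [← dstar a₁, H3 a₁ le_rfl, haa]
      rcases le_total (U₂ α a₁) a₁ with h | h
      · rw [← hne (U₂ α a₁) h, he_t]
      · rw [← hnf (U₂ α a₁) h, hf_t]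
    refine ⟨?_, ?_, H3⟩
    · intro x hx
      have hgx : U₂ α x ≤ a₁ := by
        calc U₂ α x ≤ U₂ α a₁ := mono2' _ _ _ hx
          _ = a₁ := hga
      rw [star x, hne _ hgx]
    · intro x hx
      have hgx : a₁ ≤ U₂ α x := by
        calc a₁ = U₂ α a₁ := hga.symm
          _ ≤ U₂ α x := mono2' _ _ _ hx
      rw [dstar x, hnf _ hgx]
  · rintro ⟨H1, H2, H3⟩
    -- U₁ lam y = U₁ a₁ y for a₁ ≤ y
    have hla : a₁ ≤ U₁ lam a₁ := by
      calc a₁ = U₁ f₁ a₁ := hfa.symm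
        _ ≤ U₁ μ a₁ := mono1 _ _ _ hmu_f
        _ = U₁ lam a₁ := by rw [← H2 a₁ le_rfl, H1 a₁ le_rfl]
    have hlf : U₁ lam f₁ = a₁ := by
      apply le_antisymm
      · calc U₁ lam f₁ ≤ U₁ a₁ f₁ := mono1 _ _ _ hlam_a
          _ = U₁ f₁ a₁ := comm _ _
          _ = a₁ := hfa
      · calc a₁ ≤ U₁ lam a₁ := hla
          _ ≤ U₁ lam f₁ := mono2 _ _ _ haf
    have hB : ∀ y, a₁ ≤ y → U₁ lam y = U₁ a₁ y := by
      intro y hy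
      calc U₁ lam y = U₁ lam (U₁ f₁ y) := by rw [hnf y hy]
        _ = U₁ (U₁ lam f₁) y := (assoc _ _ _).symm
        _ = U₁ a₁ y := by rw [hlf]
    have key : ∀ x y, x ≤ a₁ → U₁ (U₂ α x) y = U₁ x (U₂ α y) := by
      intro x y hx
      rcases le_total y a₁ with hy | hy
      · calc U₁ (U₂ α x) y = U₁ (U₁ lam x) y := by rw [H1 x hx]
          _ = U₁ lam (U₁ x y) := assoc _ _ _
          _ = U₁ (U₁ x y) lam := comm _ _
          _ = U₁ x (U₁ y lam) := assoc _ _ _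
          _ = U₁ x (U₁ lam y) := by rw [comm y lam]
          _ = U₁ x (U₂ α y) := by rw [← H1 y hy]
      · calc U₁ (U₂ α x) y = U₁ (U₁ lam x) y := by rw [H1 x hx]
          _ = U₁ (U₁ x lam) y := by rw [comm lam x]
          _ = U₁ x (U₁ lam y) := assoc _ _ _
          _ = U₁ x (U₁ a₁ y) := by rw [hB y hy]
          _ = U₁ x (U₁ y a₁) := by rw [comm a₁ y]
          _ = U₁ (U₁ x y) a₁ := (assoc _ _ _).symm
          _ = U₁ a₁ (U₁ x y) := comm _ _
          _ = U₁ (U₁ a₁ x) y := (assoc _ _ _).symm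
          _ = U₁ (U₁ μ x) y := by rw [← H3 x hx]
          _ = U₁ (U₁ x μ) y := by rw [comm μ x]
          _ = U₁ x (U₁ μ y) := assoc _ _ _
          _ = U₁ x (U₂ α y) := by rw [← H2 y hy]
    intro x y
    rcases le_total x a₁ with hx | hx
    · exact key x y hx
    · rcases le_total y a₁ with hy | hy
      · calc U₁ (U₂ α x) y = U₁ y (U₂ α x) := comm _ _
          _ = U₁ (U₂ α y) x := (key y x hy).symm
          _ = U₁ x (U₂ α y) := comm _ _
      · calc U₁ (U₂ α x) y = U₁ (U₁ μ x) y := by rw [H2 x hx]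
          _ = U₁ (U₁ x μ) y := by rw [comm μ x]
          _ = U₁ x (U₁ μ y) := assoc _ _ _
          _ = U₁ x (U₂ α y) := by rw [← H2 y hy]
end

section
/- Let U1 and U2 be two 2-uninorms on [0,1] with 2-neutral elements {e1,f1}_{a1} and {e2,f2}_{a2}, respectively, let α ∈ [0,1], and set μ = U2(α,f1). If U2(α,f1) ≥ f1 and U2(α,e1) ≥ a1, then U1 is (α,U2)-migrative if and only if U1(μ,x) = U2(α,x) for each x ∈ [0,1]. -/
open unitInterval

theorem stmt_11 (U₁ U₂ : I → I → I) (e₁ a₁ f₁ e₂ a₂ f₂ : I)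
    (hU₁ : IsTwoUninorm U₁ e₁ a₁ f₁) (hU₂ : IsTwoUninorm U₂ e₂ a₂ f₂) (α : I)
    (μ : I) (hμ : μ = U₂ α f₁) (h₁ : f₁ ≤ U₂ α f₁) (h₂ : a₁ ≤ U₂ α e₁) :
    Migrative U₁ U₂ α ↔ ∀ x, U₁ μ x = U₂ α x := by
  obtain ⟨comm, assoc, monoL, monoR, hea, haf, hne, hnf⟩ := hU₁
  obtain ⟨comm2, assoc2, monoL2, monoR2, _, _, _, _⟩ := hU₂
  constructor
  · intro hm x
    have branchF : a₁ ≤ U₂ α x → U₁ μ x = U₂ α x := fun hc => by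
      calc U₁ μ x = U₁ (U₂ α f₁) x := by rw [hμ]
        _ = U₁ f₁ (U₂ α x) := hm f₁ x
        _ = U₂ α x := hnf _ hc
    rcases le_total x e₁ with hxe | hxe
    · rcases le_total a₁ (U₂ α x) with hc | hc
      · exact branchF hc
      · have hx : x ≤ a₁ := hxe.trans hea
        have step1 : U₁ μ e₁ = U₂ α e₁ := by
          rw [hμ, hm f₁ e₁]; exact hnf _ h₂
        calc U₁ μ x = U₁ μ (U₁ e₁ x) := by rw [hne x hx]
          _ = U₁ (U₁ μ e₁) x := (assoc μ e₁ x).symm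
          _ = U₁ (U₂ α e₁) x := by rw [step1]
          _ = U₁ e₁ (U₂ α x) := hm e₁ x
          _ = U₂ α x := hne _ hc
    · exact branchF (h₂.trans (monoR2 α _ _ hxe))
  · intro h x y
    calc U₁ (U₂ α x) y = U₁ (U₁ μ x) y := by rw [h x]
      _ = U₁ x (U₁ μ y) := by rw [comm μ x, assoc, comm μ y]
      _ = U₁ x (U₂ α y) := by rw [h y]
end

section
/- Let U be a 2-uninorm on [0,1] with 2-neutral element {e,f}_a. Then U(x,y) = U(x,a) for all x ∈ [0,a] and y ∈ [a,f]. -/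
open unitInterval

theorem stmt_12 (U : I → I → I) (e a f : I)
    (hU : IsTwoUninorm U e a f) :
    ∀ x y, x ≤ a → a ≤ y → y ≤ f → U x y = U x a := by
  obtain ⟨hcomm, hassoc, hmono1, hmono2, hea, haf, hne, hnf⟩ := hU
  intro x y hxa hay hyf
  -- U a f = a
  have haf' : U a f = a := by rw [hcomm]; exact hnf a le_rfl
  -- U a a = a
  have haa : U a a = a := by
    apply le_antisymm
    · calc U a a ≤ U a f := hmono2 a a f haf
        _ = a := haf'
    · calc a = U e a := (hne a le_rfl).symm
        _ ≤ U a a := hmono1 e a a hea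
  -- U a y = a
  have hay' : U a y = a := by
    apply le_antisymm
    · calc U a y ≤ U a f := hmono2 a y f hyf
        _ = a := haf'
    · calc a = U a a := haa.symm
        _ ≤ U a y := hmono2 a a y hay
  -- U x y ≤ a
  have hxy_le : U x y ≤ a := by
    calc U x y ≤ U a y := hmono1 x a y hxa
      _ = a := hay'
  apply le_antisymm
  · -- U x y ≤ U x a
    calc U x y = U e (U x y) := (hne _ hxy_le).symm
      _ ≤ U a (U x y) := hmono1 e a _ hea
      _ = U (U a x) y := (hassoc a x y).symm
      _ = U (U x a) y := by rw [hcomm a x]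
      _ = U x (U a y) := hassoc x a y
      _ = U x a := by rw [hay']
  · exact hmono2 x a y hay
end

section
/- Let U be a 2-uninorm on [0,1] with 2-neutral element {e,f}_a. Then U(x,y) = U(a,y) for all x ∈ [a,f] and y ∈ [0,a]. -/
open unitInterval

theorem stmt_13 (U : I → I → I) (e a f : I)
    (hU : IsTwoUninorm U e a f) :
    ∀ x y, a ≤ x → x ≤ f → y ≤ a → U x y = U a y := by
  obtain ⟨hcomm, hassoc, hmono1, hmono2, hea, haf, he, hf⟩ := hU
  intro x y hax hxf hya
  have hUae : U a e = a := by rw [hcomm]; exact he a le_rfl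
  have hUfa : U f a = a := hf a le_rfl
  have hxe : U x e = a := le_antisymm
    (le_trans (le_trans (hmono1 x f e hxf) (hmono2 f e a hea)) hUfa.le)
    (hUae ▸ hmono1 a x e hax)
  calc U x y = U x (U e y) := by rw [he y hya]
    _ = U (U x e) y := (hassoc x e y).symm
    _ = U a y := by rw [hxe]
end

section
/- Let U be a 2-uninorm on [0,1] with 2-neutral element {e,f}_a. Then U(x,y) = U(x,a) for all x ∈ [a,1] and y ∈ [e,a]. -/
open unitInterval

theorem stmt_14 (U : I → I → I) (e a f : I)
    (hU : IsTwoUninorm U e a f) :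
    ∀ x y, a ≤ x → e ≤ y → y ≤ a → U x y = U x a := by
  obtain ⟨hc, hassoc, hm1, hm2, hea, haf, hne, hnf⟩ := hU
  intro x y hax hey hya
  -- U(x,e) ≥ a
  have hxe : a ≤ U x e := by
    calc a = U e a := (hne a le_rfl).symm
    _ = U a e := hc e a
    _ ≤ U x e := hm1 a x e hax
  -- U(x,a) = U(U(x,e),a)
  have h1 : U x a = U (U x e) a := by
    rw [hassoc, hne a le_rfl]
  -- U(x,a) ≤ U(x,e)
  have h2 : U x a ≤ U x e := by
    calc U x a = U (U x e) a := h1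
    _ ≤ U (U x e) f := hm2 _ a f haf
    _ = U f (U x e) := hc _ _
    _ = U x e := hnf _ hxe
  have h3 : U x e ≤ U x y := hm2 x e y hey
  have h4 : U x y ≤ U x a := hm2 x y a hya
  exact le_antisymm h4 (le_trans h2 h3)
end

section
/- Let U be a 2-uninorm on [0,1] with 2-neutral element {e,f}_a. Then U(x,y) = U(a,y) for all x ∈ [e,a] and y ∈ [a,1]. -/
open unitInterval

theorem stmt_15 (U : I → I → I) (e a f : I)
    (hU : IsTwoUninorm U e a f) :
    ∀ x y, e ≤ x → x ≤ a → a ≤ y → U x y = U a y := by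
  obtain ⟨hcomm, hassoc, hmono1, hmono2, hea, haf, hne, hnf⟩ := hU
  intro x y hex hxa hay
  have hxf : U x f = a := by
    have h1 : U x f ≤ a := by
      have := hmono1 x a f hxa
      rwa [hcomm a f, hnf a le_rfl] at this
    have h2 : a ≤ U x f := by
      have h3 : a ≤ U x a := by
        have := hmono1 e x a hex
        rwa [hne a le_rfl] at this
      exact h3.trans (hmono2 x a f haf)
    exact le_antisymm h1 h2
  calc U x y = U x (U f y) := by rw [hnf y hay]
    _ = U (U x f) y := (hassoc x f y).symm
    _ = U a y := by rw [hxf]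
end

section
/- Let U be a 2-uninorm on [0,1] with 2-neutral element {e,f}_a. Then min(x,y) ≤ U(x,y) ≤ a for all (x,y) ∈ [0,e]×[e,f] ∪ [e,f]×[0,e]. -/
open unitInterval

theorem stmt_16 (U : I → I → I) (e a f : I)
    (hU : IsTwoUninorm U e a f) :
    ∀ x y, ((x ≤ e ∧ e ≤ y ∧ y ≤ f) ∨ (e ≤ x ∧ x ≤ f ∧ y ≤ e)) →
      min x y ≤ U x y ∧ U x y ≤ a := by
  obtain ⟨hcomm, hassoc, hmono1, hmono2, hea, haf, hne, hnf⟩ := hU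
  have key : ∀ x y, x ≤ e → e ≤ y → y ≤ f → min x y ≤ U x y ∧ U x y ≤ a := by
    intro x y hxe hey hyf
    constructor
    · calc min x y ≤ x := min_le_left x y
        _ = U x e := by rw [hcomm]; exact (hne x (hxe.trans hea)).symm
        _ ≤ U x y := hmono2 x e y hey
    · calc U x y ≤ U e y := hmono1 x e y hxe
        _ ≤ U e f := hmono2 e y f hyf
        _ ≤ U a f := hmono1 e a f hea
        _ = a := by rw [hcomm]; exact hnf a le_rfl
  intro x y h
  rcases h with ⟨h1, h2, h3⟩ | ⟨h1, h2, h3⟩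
  · exact key x y h1 h2 h3
  · have := key y x h3 h1 h2
    rw [min_comm, hcomm]
    exact this
end

section
/- Let U be a 2-uninorm on [0,1] with 2-neutral element {e,f}_a. Then U(x,y) ∈ [0,e) ∪ {a} ∪ (f,1] for all (x,y) ∈ [0,a]×[a,1] ∪ [a,1]×[0,a]. -/
open unitInterval

private lemma key_aux (U : I → I → I) (e a f : I)
    (hU : IsTwoUninorm U e a f) (x y : I) (hx : x ≤ a) (hy : a ≤ y) :
    U x y < e ∨ U x y = a ∨ f < U x y := by
  obtain ⟨hcomm, hassoc, hmono₁, hmono₂, hea, haf, hne, hnf⟩ := hU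
  set z := U x y with hz
  rcases lt_or_ge z e with h | h
  · exact Or.inl h
  rcases lt_or_ge f z with h' | h'
  · exact Or.inr (Or.inr h')
  -- e ≤ z ≤ f; show z = a
  have hez : U e z = z := by
    rw [hz, ← hassoc, hne x hx]
  have hfz : U f z = z := by
    rw [hz, hcomm x y, ← hassoc, hnf y hy]
  refine Or.inr (Or.inl ?_)
  rcases le_total z a with hza | haz
  · refine le_antisymm hza ?_
    calc a = U e a := (hne a le_rfl).symm
      _ = U a e := hcomm e a
      _ ≤ U f e := hmono₁ a f e haf
      _ ≤ U f z := hmono₂ f e z h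
      _ = z := hfz
  · refine le_antisymm ?_ haz
    calc z = U e z := hez.symm
      _ ≤ U e f := hmono₂ e z f h'
      _ ≤ U a f := hmono₁ e a f hea
      _ = U f a := hcomm a f
      _ = a := hnf a le_rfl

theorem stmt_18 (U : I → I → I) (e a f : I)
    (hU : IsTwoUninorm U e a f) :
    ∀ x y, ((x ≤ a ∧ a ≤ y) ∨ (a ≤ x ∧ y ≤ a)) →
      (U x y < e ∨ U x y = a ∨ f < U x y) := by
  intro x y h
  rcases h with ⟨hx, hy⟩ | ⟨hx, hy⟩
  · exact key_aux U e a f hU x y hx hy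
  · rw [hU.1 x y]
    exact key_aux U e a f hU y x hy hx
end

section
/- Let T be a t-norm on [0,1] (a commutative, associative, increasing binary operation on [0,1] with neutral element 1), let U be a 2-uninorm on [0,1] with 2-neutral element {e,f}_a, and let α ∈ [0,1]. Then T is (α,U)-migrative, i.e. T(U(α,x),y) = T(x,U(α,y)) for all x,y ∈ [0,1], if and only if T(U(α,1),x) = U(α,x) for each x ∈ [0,1]. -/
open unitInterval

theorem stmt_19 (T U : I → I → I) (e a f : I)
    (hT_comm : ∀ x y, T x y = T y x)
    (hT_assoc : ∀ x y z, T (T x y) z = T x (T y z))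
    (hT_mono₁ : ∀ x₁ x₂ y, x₁ ≤ x₂ → T x₁ y ≤ T x₂ y)
    (hT_mono₂ : ∀ x y₁ y₂, y₁ ≤ y₂ → T x y₁ ≤ T x y₂)
    (hT_one : ∀ x, T 1 x = x)
    (hU : IsTwoUninorm U e a f) (α : I) :
    (∀ x y, T (U α x) y = T x (U α y)) ↔ ∀ x, T (U α 1) x = U α x := by
  constructor
  · intro hmig x
    have := hmig 1 x
    rwa [hT_one] at this
  · intro h x y
    rw [← h x, ← h y, hT_assoc, hT_comm x (T (U α 1) y), hT_assoc, hT_comm y x]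
end
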